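/- arXiv:2201.00305 — 3 statements merged into one kernel-verified Lean document; each statement's English description precedes it below -/
import Mathlib

section
/- Define b*_k(ℓ) = σ_{k-3}(ℓ) - 2^{k-2}·σ_{k-3}(ℓ/4), where σ_{k-3}(ℓ/4) is interpreted as 0 unless 4 divides ℓ. If p = 2k-5 is prime and the Kronecker symbol satisfies χ_{-p}(ℓ) = -1, then b*_k(ℓ) ≡ 0 (mod p). -/
/-- The Kronecker symbol evaluated at the prime 2 (as bottom argument). -/
def kroneckerChar₂ (a : ℤ) : ℤ :=
  if a % 2 = 0 then 0 else if a % 8 = 1 ∨ a % 8 = 7 then 1 else -1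

/-- The Kronecker symbol `(a / n)` for a natural number `n`, defined by splitting off
the 2-part of `n` and using the Jacobi symbol on the odd part. -/
def kroneckerSym (a : ℤ) (n : ℕ) : ℤ :=
  kroneckerChar₂ a ^ n.factorization 2 * jacobiSym a (ordCompl[2] n)

/-- `b*_k(ℓ) = σ_{k-3}(ℓ) - 2^{k-2} σ_{k-3}(ℓ/4)`, where the second term is `0`
unless `4 ∣ ℓ`. -/
def bStar (k ℓ : ℕ) : ℤ :=
  (∑ d ∈ ℓ.divisors, (d : ℤ) ^ (k - 3)) -
    2 ^ (k - 2) * (if 4 ∣ ℓ then ∑ d ∈ (ℓ / 4).divisors, (d : ℤ) ^ (k - 3) else 0)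

/-! Since `k` is even, `p ≡ 3 (mod 4)`, and then quadratic reciprocity turns `χ_{-p}(ℓ)` into the
Legendre symbol `(ℓ/p)`; by Euler's criterion `χ_{-p}(ℓ) = -1` says `ℓ^e ≡ -1 (mod p)` for
`e = (p-1)/2 = k-3`. For a divisor `d` of `ℓ` this forces `d^{2e} ≡ 1` and `d^e (ℓ/d)^e ≡ -1`,
so `(ℓ/d)^e ≡ -d^e`: the involution `d ↦ ℓ/d` gives `σ_e(ℓ) ≡ -σ_e(ℓ) ≡ 0`. As `4^e ≡ 1`, the
same applies to `ℓ/4` when `4 ∣ ℓ`. -/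

open ZMod

lemma kroneckerChar₂_neg_natCast (p : ℕ) : kroneckerChar₂ (-p) = χ₈ p := by
  rw [kroneckerChar₂, χ₈_nat_eq_if_mod_eight]
  split_ifs <;> omega

lemma jacobiSym_neg_natCast_of_mod_four_eq_three {p m : ℕ} (hp : p % 4 = 3) (hm : Odd m) :
    jacobiSym (-p) m = jacobiSym m p := by
  rw [jacobiSym.neg _ hm]
  rcases Nat.odd_mod_four_iff.mp (Nat.odd_iff.mp hm) with hm4 | hm4
  · rw [χ₄_nat_one_mod_four hm4, one_mul,
      jacobiSym.quadratic_reciprocity_one_mod_four' (Nat.odd_iff.mpr (by omega)) hm4]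
  · rw [χ₄_nat_three_mod_four hm4, jacobiSym.quadratic_reciprocity_three_mod_four hp hm4,
      neg_one_mul, neg_neg]

lemma kroneckerSym_neg_natCast_eq_jacobiSym {p n : ℕ} (hp : p % 4 = 3) (hn : n ≠ 0) :
    kroneckerSym (-p) n = jacobiSym n p := by
  have hodd : Odd (ordCompl[2] n) :=
    Nat.coprime_two_left.mp (Nat.coprime_ordCompl Nat.prime_two hn)
  conv_rhs => rw [← Nat.ordProj_mul_ordCompl_eq_self n 2, Nat.cast_mul, Nat.cast_pow,
    Nat.cast_ofNat]
  rw [jacobiSym.mul_left, jacobiSym.pow_left, jacobiSym.at_two (Nat.odd_iff.mpr (by omega)),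
    kroneckerSym, kroneckerChar₂_neg_natCast, jacobiSym_neg_natCast_of_mod_four_eq_three hp hodd]

section

variable {p : ℕ} [Fact p.Prime]

lemma ZMod.sq_pow_div_two_eq_one (hp : p ≠ 2) {a : ZMod p} (ha : a ≠ 0) :
    (a ^ 2) ^ (p / 2) = 1 := by
  rw [← pow_mul, Nat.two_mul_odd_div_two ((Fact.out : p.Prime).mod_two_eq_one_iff_ne_two.mpr hp),
    pow_card_sub_one_eq_one ha]

lemma ZMod.sum_divisors_pow_div_two_eq_zero (hp : p ≠ 2) {n : ℕ}
    (hn : (n : ZMod p) ^ (p / 2) = -1) : ∑ d ∈ n.divisors, (d : ZMod p) ^ (p / 2) = 0 := by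
  have hflip : ∀ d ∈ n.divisors, ((n / d : ℕ) : ZMod p) ^ (p / 2) = -(d : ZMod p) ^ (p / 2) := by
    intro d hd
    have hnd : ((n / d : ℕ) : ZMod p) * d = n := by
      rw [← Nat.cast_mul, Nat.div_mul_cancel (Nat.dvd_of_mem_divisors hd)]
    have hd0 : (d : ZMod p) ≠ 0 := by
      rintro h0
      rw [← hnd, h0, mul_zero, zero_pow (by have := (Fact.out : p.Prime).two_le; omega)] at hn
      exact one_ne_zero (neg_eq_zero.mp hn.symm)
    calc ((n / d : ℕ) : ZMod p) ^ (p / 2)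
        = ((n / d : ℕ) : ZMod p) ^ (p / 2) * ((d : ZMod p) ^ 2) ^ (p / 2) := by
          rw [ZMod.sq_pow_div_two_eq_one hp hd0, mul_one]
      _ = (n : ZMod p) ^ (p / 2) * (d : ZMod p) ^ (p / 2) := by rw [← hnd]; ring
      _ = -(d : ZMod p) ^ (p / 2) := by rw [hn, neg_one_mul]
  refine (Ring.eq_self_iff_eq_zero_of_char_ne_two (by rwa [ringChar_zmod_n])).mp ?_
  rw [← Finset.sum_neg_distrib, ← Finset.sum_congr rfl hflip]
  exact Nat.sum_div_divisors n fun d ↦ (d : ZMod p) ^ (p / 2)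

end

theorem stmt2_general (k : ℕ) (hke : Even k) (p : ℕ) (hpk : p = 2 * k - 5)
    (hp : p.Prime) (ℓ : ℕ)
    (hχ : kroneckerSym (-(p : ℤ)) ℓ = -1) :
    (p : ℤ) ∣ bStar k ℓ := by
  have : Fact p.Prime := ⟨hp⟩
  have hp4 : p % 4 = 3 := by
    obtain ⟨j, rfl⟩ := hke
    have := hp.two_le
    omega
  have hp2 : p ≠ 2 := by omega
  have he : k - 3 = p / 2 := by omega
  have hℓ0 : ℓ ≠ 0 := by
    rintro rfl
    simp [kroneckerSym] at hχ
  have hℓp : (ℓ : ZMod p) ^ (p / 2) = -1 := by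
    rw [← Int.cast_natCast, ← legendreSym.eq_pow, jacobiSym.legendreSym.to_jacobiSym,
      ← kroneckerSym_neg_natCast_eq_jacobiSym hp4 hℓ0, hχ, Int.cast_neg, Int.cast_one]
  rw [← ZMod.intCast_zmod_eq_zero_iff_dvd, bStar, he]
  push_cast
  rw [ZMod.sum_divisors_pow_div_two_eq_zero hp2 hℓp, zero_sub, neg_eq_zero]
  split_ifs with h4
  · obtain ⟨m, rfl⟩ := h4
    have hmp : (m : ZMod p) ^ (p / 2) = -1 := by
      rwa [Nat.cast_mul, Nat.cast_ofNat, mul_pow, show (4 : ZMod p) = 2 ^ 2 by norm_num,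
        ZMod.sq_pow_div_two_eq_one hp2 (Ring.two_ne_zero (by rwa [ringChar_zmod_n])), one_mul]
        at hℓp
    rw [Nat.mul_div_cancel_left m (by norm_num), ZMod.sum_divisors_pow_div_two_eq_zero hp2 hmp,
      mul_zero]
  · rw [mul_zero]

/-- If `k ≥ 4` is even, `p = 2k - 5` is prime and `χ_{-p}(ℓ) = -1`, then
`b*_k(ℓ) ≡ 0 (mod p)`. -/
theorem stmt2 (k : ℕ) (hk : 4 ≤ k) (hke : Even k) (p : ℕ) (hpk : p = 2 * k - 5)
    (hp : p.Prime) (ℓ : ℕ) (hℓ : 0 < ℓ)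
    (hχ : kroneckerSym (-(p : ℤ)) ℓ = -1) :
    (p : ℤ) ∣ bStar k ℓ :=
  stmt2_general k hke p hpk hp ℓ hχ
end

section
/- If χ_{-23}(ℓ) = -1 for a positive integer ℓ, where χ_{-23} is the Kronecker symbol attached to -23, then the Ramanujan tau function satisfies τ(ℓ) ≡ 0 (mod 23). -/
/-- The Ramanujan tau function: the `n`-th coefficient of `q * ∏ (1 - q^i)^24`
(the product over `i ≤ n` suffices to determine the `n`-th coefficient). -/
noncomputable def ramanujanTau (n : ℕ) : ℤ :=
  PowerSeries.coeff (R := ℤ) n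
    (PowerSeries.X * ∏ i ∈ Finset.range n, ((1 : PowerSeries ℤ) - PowerSeries.X ^ (i + 1)) ^ 24)

open PowerSeries Finset

theorem PowerSeries.pow_char_eq_expand (p : ℕ) [hp : Fact p.Prime] (f : (ZMod p)⟦X⟧) :
    f ^ p = expand p hp.out.ne_zero f := by
  have := MvPowerSeries.map_frobenius_expand (R := ZMod p) p hp.out.ne_zero (f := f)
  rw [ZMod.frobenius_zmod, MvPowerSeries.map_id] at this
  exact this.symm

theorem PowerSeries.coeff_mul_prod_one_sub_X_pow {R : Type*} [CommRing R] {n : ℕ} {s : Finset ℕ}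
    {k : ℕ → ℕ} (hk : ∀ i ∈ s, n < k i) (f : R⟦X⟧) :
    coeff n (f * ∏ i ∈ s, (1 - X ^ k i)) = coeff n f := by
  obtain ⟨g, hg⟩ : X ^ (n + 1) ∣ ∏ i ∈ s, (1 - X ^ k i : R⟦X⟧) - 1 := by
    rw [← Ideal.mem_span_singleton, ← Ideal.Quotient.eq, map_prod, map_one]
    refine Finset.prod_eq_one fun i hi => ?_
    rw [map_sub, map_one, sub_eq_self, Ideal.Quotient.eq_zero_iff_mem, Ideal.mem_span_singleton]
    exact pow_dvd_pow X (hk i hi)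
  rw [← sub_add_cancel (∏ i ∈ s, _) 1, hg, mul_add, mul_one, map_add, mul_left_comm,
    coeff_X_pow_mul', if_neg (by omega), zero_add]

theorem PowerSeries.coeff_prod_range_one_sub_X_pow {R : Type*} [CommRing R] {n N : ℕ}
    (hn : n < N) :
    coeff n (∏ i ∈ range N, (1 - X ^ (i + 1) : R⟦X⟧)) = coeff n (pentagonalSeries R) := by
  obtain ⟨s, hs⟩ := Filter.eventually_atTop.1 (coeff_prod_one_sub_X_pow_eventually_eq R n)
  have hsub : range N ⊆ s ∪ range N := subset_union_right
  rw [← hs _ subset_union_left, ← prod_sdiff hsub, mul_comm, coeff_mul_prod_one_sub_X_pow]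
  intro i hi
  have := mem_range.not.1 (mem_sdiff.1 hi).2
  omega

theorem isSquare_twentyFour_mul_pentagonal_add_one (k : ℤ) :
    IsSquare (24 * (pentagonal k : ℤ) + 1) :=
  ⟨6 * k - 1, by linear_combination 12 * two_mul_natCast_pentagonal k⟩

theorem PowerSeries.isSquare_of_coeff_pentagonalSeries_ne_zero {R : Type*} [CommRing R] {n : ℕ}
    (h : coeff n (pentagonalSeries R) ≠ 0) : IsSquare (24 * (n : ℤ) + 1) := by
  by_contra hn
  refine h (coeff_pentagonalSeries_eq_zero R ?_)
  rintro ⟨k, rfl⟩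
  exact hn (isSquare_twentyFour_mul_pentagonal_add_one k)

theorem PowerSeries.coeff_prod_one_sub_X_pow_pow_succ_char_eq_zero (p : ℕ) [hp : Fact p.Prime]
    {n N : ℕ} (hn : n < N) (hsq : ¬ IsSquare (24 * n + 1 : ZMod p)) :
    coeff n ((∏ i ∈ range N, (1 - X ^ (i + 1) : (ZMod p)⟦X⟧)) ^ (p + 1)) = 0 := by
  rw [pow_succ', pow_char_eq_expand, coeff_mul]
  refine sum_eq_zero fun ⟨a, m⟩ ham => ?_
  rw [HasAntidiagonal.mem_antidiagonal] at ham
  by_cases hm : p ∣ m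
  · suffices coeff a (∏ i ∈ range N, (1 - X ^ (i + 1) : (ZMod p)⟦X⟧)) = 0 by rw [this, zero_mul]
    rw [coeff_prod_range_one_sub_X_pow (by omega)]
    by_contra ha
    obtain ⟨c, rfl⟩ := hm
    refine hsq ?_
    have := (isSquare_of_coeff_pentagonalSeries_ne_zero ha).map (Int.castRingHom (ZMod p))
    rw [← ham]
    simpa using this
  · rw [coeff_expand_of_not_dvd p _ _ hm, mul_zero]

theorem jacobiSym_neg_eq_jacobiSym_of_mod_four_eq_three {q m : ℕ} (hq : q % 4 = 3) (hm : Odd m) :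
    jacobiSym (-q) m = jacobiSym m q := by
  rw [neg_eq_neg_one_mul, jacobiSym.mul_left, jacobiSym.at_neg_one hm]
  rcases Nat.odd_mod_four_iff.1 (Nat.odd_iff.1 hm) with hm1 | hm3
  · rw [ZMod.χ₄_nat_one_mod_four hm1, one_mul,
      jacobiSym.quadratic_reciprocity_one_mod_four' (Nat.odd_iff.2 (by omega)) hm1]
  · rw [ZMod.χ₄_nat_three_mod_four hm3, jacobiSym.quadratic_reciprocity_three_mod_four hq hm3,
      neg_one_mul, neg_neg]

theorem kroneckerSym_neg_twentyThree {ℓ : ℕ} (hℓ : 0 < ℓ) :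
    kroneckerSym (-23) ℓ = jacobiSym ℓ 23 := by
  have hodd : Odd (ordCompl[2] ℓ) :=
    Nat.odd_iff.2 (Nat.two_dvd_ne_zero.1 (Nat.not_dvd_ordCompl Nat.prime_two hℓ.ne'))
  have hchar : kroneckerChar₂ (-23) = 1 := by decide
  have htwo : jacobiSym 2 23 = 1 := by rw [jacobiSym.at_two (by decide)]; rfl
  conv_rhs => rw [← Nat.ordProj_mul_ordCompl_eq_self ℓ 2]
  rw [kroneckerSym, hchar, one_pow, one_mul, Nat.cast_mul, jacobiSym.mul_left, Nat.cast_pow,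
    jacobiSym.pow_left, Nat.cast_ofNat, htwo, one_pow, one_mul]
  exact jacobiSym_neg_eq_jacobiSym_of_mod_four_eq_three (q := 23) (by norm_num) hodd

theorem ramanujanTau_succ (n : ℕ) :
    ramanujanTau (n + 1) = coeff n ((∏ i ∈ range (n + 1), (1 - X ^ (i + 1) : ℤ⟦X⟧)) ^ 24) := by
  rw [ramanujanTau, coeff_succ_X_mul, prod_pow]

/-- If `χ_{-23}(ℓ) = -1` for a positive integer `ℓ`, then `τ(ℓ) ≡ 0 (mod 23)`. -/
theorem stmt3 (ℓ : ℕ) (hℓ : 0 < ℓ) (hχ : kroneckerSym (-23) ℓ = -1) :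
    (23 : ℤ) ∣ ramanujanTau ℓ := by
  have : Fact (Nat.Prime 23) := ⟨by norm_num⟩
  obtain ⟨n, rfl⟩ : ∃ n, ℓ = n + 1 := ⟨ℓ - 1, by omega⟩
  have hns : ¬ IsSquare (24 * n + 1 : ZMod 23) := by
    have := ZMod.nonsquare_of_jacobiSym_eq_neg_one ((kroneckerSym_neg_twentyThree hℓ).symm.trans hχ)
    convert this using 2
    have h23 : (23 : ZMod 23) = 0 := rfl
    push_cast
    linear_combination (n : ZMod 23) * h23
  refine (ZMod.intCast_zmod_eq_zero_iff_dvd _ 23).1 ?_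
  rw [ramanujanTau_succ, ← eq_intCast (Int.castRingHom _), ← coeff_map]
  simpa using coeff_prod_one_sub_X_pow_pow_succ_char_eq_zero 23 n.lt_add_one hns
end

section
/- Ramanujan's congruence mod 23 at primes: if q is a prime with Legendre symbol (q/23) = -1, then τ(q) ≡ 0 (mod 23). -/
instance : Fact (Nat.Prime 23) := ⟨by norm_num⟩

/-!
Modulo 23 the Frobenius gives `Δ = q ∏ (1 - qⁿ)²⁴ ≡ q ∏ (1 - qⁿ) ∏ (1 - q²³ⁿ)`. By Euler's pentagonal
number theorem the first product is supported on the pentagonal numbers `a = k(3k-1)/2`, and the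
second on multiples of 23. So `τ(n) mod 23` is a sum over `n = a + 1 + 23c`, and each such `n` is
congruent to `24a + 1 = (6k-1)²`, a square mod 23. Hence `τ(n) ≡ 0` when `n` is a non-residue.
-/

open Finset PowerSeries

theorem twenty_four_mul_natCast_pentagonal_add_one (k : ℤ) :
    24 * (pentagonal k : ℤ) + 1 = (6 * k - 1) ^ 2 := by
  linear_combination 12 * two_mul_natCast_pentagonal k

theorem isSquare_natCast_pentagonal_add_mul_23_add_one (k : ℤ) (c : ℕ) :
    IsSquare ((pentagonal k + 23 * c + 1 : ℕ) : ZMod 23) := by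
  have h := congrArg (Int.cast : ℤ → ZMod 23) (twenty_four_mul_natCast_pentagonal_add_one k)
  push_cast at h
  have h23 : (23 : ZMod 23) = 0 := by decide
  refine ⟨((6 * k - 1 : ℤ) : ZMod 23), ?_⟩
  push_cast
  linear_combination h + ((c : ZMod 23) - pentagonal k) * h23

namespace PowerSeries

variable {R : Type*} [CommRing R]

theorem coeff_prod_range_one_sub_X_pow_s15 {a N : ℕ} (h : a ≤ N) :
    coeff a (∏ i ∈ range N, (1 - X ^ (i + 1)) : R⟦X⟧) = (pentagonalSeries R).coeff a := by
  nontriviality R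
  obtain ⟨s, hs⟩ := Filter.eventually_atTop.mp (coeff_prod_one_sub_X_pow_eventually_eq R a)
  rw [← hs (range N ∪ s) subset_union_right, ← union_sdiff_self_eq_union,
    prod_union disjoint_sdiff, coeff_mul_prod_one_sub_of_lt_order]
  intro j hj
  have hjN : N ≤ j := by simpa using (mem_sdiff.mp hj).2
  rw [order_X_pow]
  exact_mod_cast Nat.lt_succ_of_le (h.trans hjN)

theorem prod_one_sub_X_pow_pow_char {ι : Type*} (p : ℕ) [Fact p.Prime] [CharP R p]
    (s : Finset ι) (e : ι → ℕ) :
    (∏ i ∈ s, (1 - X ^ e i) : R⟦X⟧) ^ p =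
      expand p (Fact.out : p.Prime).ne_zero (∏ i ∈ s, (1 - X ^ e i)) := by
  have : CharP R⟦X⟧ p := charP_of_injective_ringHom C_injective p
  rw [← prod_pow, map_prod]
  refine prod_congr rfl fun i _ => ?_
  rw [sub_pow_char, one_pow, map_sub, map_one, map_pow, expand_X, ← pow_mul, ← pow_mul, mul_comm]

theorem intCast_ramanujanTau_succ (m : ℕ) :
    (ramanujanTau (m + 1) : R) = coeff m ((∏ i ∈ range (m + 1), (1 - X ^ (i + 1)) : R⟦X⟧) ^ 24) := by
  rw [ramanujanTau, ← eq_intCast (Int.castRingHom R), ← coeff_map, prod_pow]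
  simp only [map_mul, map_pow, map_prod, map_sub, map_one, map_X, coeff_succ_X_mul]

end PowerSeries

theorem stmt15_general (q : ℕ) (hleg : legendreSym 23 q = -1) :
    (23 : ℤ) ∣ ramanujanTau q := by
  have hsq : ¬IsSquare (q : ZMod 23) := (legendreSym.eq_neg_one_iff' 23).mp hleg
  obtain ⟨m, rfl⟩ : ∃ m, q = m + 1 :=
    Nat.exists_eq_add_one_of_ne_zero (by rintro rfl; exact hsq ⟨0, by simp⟩)
  refine (ZMod.intCast_zmod_eq_zero_iff_dvd _ 23).mp ?_
  rw [intCast_ramanujanTau_succ, pow_succ', prod_one_sub_X_pow_pow_char, coeff_mul]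
  refine sum_eq_zero fun ⟨a, b⟩ hab => ?_
  rw [HasAntidiagonal.mem_antidiagonal] at hab
  by_cases hb : 23 ∣ b
  · rw [coeff_prod_range_one_sub_X_pow_s15 (by omega), coeff_pentagonalSeries_eq_zero, zero_mul]
    rintro ⟨k, rfl⟩
    obtain ⟨c, rfl⟩ := hb
    subst hab
    exact hsq (isSquare_natCast_pentagonal_add_mul_23_add_one k c)
  · rw [coeff_expand_of_not_dvd _ _ _ hb, mul_zero]

/-- If `q` is a prime with Legendre symbol `(q/23) = -1`, then `τ(q) ≡ 0 (mod 23)`. -/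
theorem stmt15 (q : ℕ) (hq : q.Prime) (hleg : legendreSym 23 q = -1) :
    (23 : ℤ) ∣ ramanujanTau q :=
  stmt15_general q hleg
end
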